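/- Let G and H be finite connected simple graphs, fix a root (r_G, r_H) of G□H, fix v ∈ V(H)\{r_H}, and let d := dist_H(v, r_H). Let c be a pebbling configuration on G□H, let s_v be the support size of c restricted to the slice G_v, and suppose Σ_{j ∈ V(H)\{r_H, v}} ( Σ_{i∈V(G)} ⌊c(i,j) / 2^{dist_H(v,j)}⌋ ) + c̃_v ≥ π₂^{mon}(G, s_v) + (2^d − 2)·π(G). Then c is (r_G, r_H)-solvable. -/

import Mathlib

open SimpleGraph Finset

/-- A single pebbling move on `G`: remove two pebbles from a vertex `v` with at least two
pebbles and add one pebble to an adjacent vertex `w`. -/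
def PebblingMove {V : Type*} (G : SimpleGraph V) (c c' : V → ℕ) : Prop :=
  ∃ v w, G.Adj v w ∧ 2 ≤ c v ∧ c' v = c v - 2 ∧ c' w = c w + 1 ∧
    ∀ u, u ≠ v → u ≠ w → c' u = c u

/-- Some finite sequence of pebbling moves starting from `c` places at least `t` pebbles
on the vertex `r`. -/
def NSolvable {V : Type*} (G : SimpleGraph V) (c : V → ℕ) (r : V) (t : ℕ) : Prop :=
  ∃ c', Relation.ReflTransGen (PebblingMove G) c c' ∧ t ≤ c' r

/-- A configuration `c` is `r`-solvable. -/
def Solvable {V : Type*} (G : SimpleGraph V) (c : V → ℕ) (r : V) : Prop :=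
  NSolvable G c r 1

/-- The pebbling number `π(G)`: least `k` such that every configuration of size `k` is
`r`-solvable for every root `r`. -/
noncomputable def pebblingNumber {V : Type*} (G : SimpleGraph V) [Fintype V] : ℕ :=
  sInf {k | ∀ c : V → ℕ, (∑ v, c v) = k → ∀ r, Solvable G c r}

/-- The 2-pebbling number `π₂(G, s)`: least `m` such that for every root `r`, every
configuration of size at least `m` with support of size exactly `s` can place two pebbles
on `r`. -/
noncomputable def twoPebblingNumber {V : Type*} (G : SimpleGraph V) [Fintype V] (s : ℕ) : ℕ :=
  sInf {m | ∀ (r : V) (c : V → ℕ), m ≤ ∑ v, c v →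
    (Finset.univ.filter fun v => 1 ≤ c v).card = s → NSolvable G c r 2}

/-- The 2-pebbling number with the convention `π₂(G, 0) = 2π(G)`. -/
noncomputable def twoPebblingNumber' {V : Type*} (G : SimpleGraph V) [Fintype V] (s : ℕ) : ℕ :=
  if s = 0 then 2 * pebblingNumber G else twoPebblingNumber G s

/-- The monotonic 2-pebbling number `π₂^{mon}(G, s) = max_{s ≤ s' ≤ |V(G)|} π₂(G, s')`. -/
noncomputable def twoPebblingNumberMon {V : Type*} (G : SimpleGraph V) [Fintype V]
    (s : ℕ) : ℕ :=
  (Finset.Icc s (Fintype.card V)).sup (twoPebblingNumber' G)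

/-!
A stack of `k * 2 ^ ℓ` pebbles on one vertex can be walked along a path of length `ℓ` to put
`k` pebbles on its endpoint. Walking each stack of the slice `G_j` along a shortest path of the
`H`-fibre into the slice `G_v` therefore yields a configuration whose restriction `f` to `G_v`
has at least the hypothesised number of pebbles and support at least `s_v`. Since
`π₂(G, s) ≥ s`, the configuration `f` splits as `(f - e) + e`, where `e` takes fewer pebbles
from each vertex than it holds and `|e| = (2 ^ d - 2) π(G)`: then `f - e` has the support of `f`
and at least `π₂(G, s)` pebbles, so it puts two pebbles on `r_G`, while `e` puts `2 ^ d - 2`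
more there, `π(G)` pebbles at a time. The resulting `2 ^ d` pebbles on `(r_G, v)` reach the root
along a shortest path of the `H`-fibre of `r_G`.
-/

namespace PebblingMove

variable {V W : Type*} {G : SimpleGraph V}

theorem add_right {a b : V → ℕ} (h : PebblingMove G a b) (e : V → ℕ) :
    PebblingMove G (a + e) (b + e) := by
  obtain ⟨p, q, hpq, h2, hp, hq, ho⟩ := h
  refine ⟨p, q, hpq, ?_, ?_, ?_, fun u hup huq => ?_⟩
  · simp only [Pi.add_apply]; omega
  · simp only [Pi.add_apply, hp]; omega
  · simp only [Pi.add_apply, hq]; omega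
  · simp only [Pi.add_apply, ho u hup huq]

theorem reflTransGen_add_right {a b : V → ℕ} (h : Relation.ReflTransGen (PebblingMove G) a b)
    (e : V → ℕ) : Relation.ReflTransGen (PebblingMove G) (a + e) (b + e) :=
  Relation.ReflTransGen.lift (· + e) (fun _ _ hm => add_right hm e) _ _ h

theorem reflTransGen_add {a b a' b' : V → ℕ} (h : Relation.ReflTransGen (PebblingMove G) a b)
    (h' : Relation.ReflTransGen (PebblingMove G) a' b') :
    Relation.ReflTransGen (PebblingMove G) (a + a') (b + b') :=
  (reflTransGen_add_right h a').trans <| by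
    simpa only [add_comm b] using reflTransGen_add_right h' b

theorem reflTransGen_sum {ι : Type*} (s : Finset ι) {f g : ι → V → ℕ}
    (h : ∀ i ∈ s, Relation.ReflTransGen (PebblingMove G) (f i) (g i)) :
    Relation.ReflTransGen (PebblingMove G) (∑ i ∈ s, f i) (∑ i ∈ s, g i) := by
  classical
  induction s using Finset.induction_on with
  | empty => simpa only [sum_empty] using Relation.ReflTransGen.refl
  | insert i s hi ih =>
    rw [sum_insert hi, sum_insert hi]
    exact reflTransGen_add (h i (mem_insert_self i s)) (ih fun j hj => h j (mem_insert_of_mem hj))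

theorem eq_of_reflTransGen_of_le_one {c c' : V → ℕ} (hc : ∀ v, c v ≤ 1)
    (h : Relation.ReflTransGen (PebblingMove G) c c') : c' = c := by
  rcases Relation.ReflTransGen.cases_head h with rfl | ⟨_, ⟨p, _, _, h2, _⟩, _⟩
  · rfl
  · exact absurd (hc p) (by omega)

theorem exists_lift {G' : SimpleGraph W} (φ : G ↪g G') {f f' : V → ℕ}
    (h : PebblingMove G f f') {C : W → ℕ} (hC : C ∘ φ = f) :
    ∃ C', PebblingMove G' C C' ∧ C' ∘ φ = f' := by
  classical
  obtain ⟨p, q, hpq, h2, hp, hq, ho⟩ := h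
  subst hC
  have hne : φ q ≠ φ p := φ.injective.ne hpq.ne'
  refine ⟨Function.update (Function.update C (φ p) (C (φ p) - 2)) (φ q) (C (φ q) + 1),
    ⟨φ p, φ q, φ.map_adj_iff.2 hpq, h2, ?_, ?_, fun u hup huq => ?_⟩, ?_⟩
  · simp [hne.symm]
  · simp
  · simp [hup, huq]
  · funext i
    by_cases hiq : i = q
    · subst hiq; simp [hq]
    by_cases hip : i = p
    · subst hip; simp [hp, φ.injective.ne hiq]
    · simp [φ.injective.ne hiq, φ.injective.ne hip, ho i hip hiq]

theorem exists_reflTransGen_lift {G' : SimpleGraph W} (φ : G ↪g G') {f f' : V → ℕ}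
    (h : Relation.ReflTransGen (PebblingMove G) f f') {C : W → ℕ} (hC : C ∘ φ = f) :
    ∃ C', Relation.ReflTransGen (PebblingMove G') C C' ∧ C' ∘ φ = f' := by
  induction h with
  | refl => exact ⟨C, .refl, hC⟩
  | tail _ hm ih =>
    obtain ⟨C₁, h₁, hC₁⟩ := ih
    obtain ⟨C₂, h₂, hC₂⟩ := exists_lift φ hm hC₁
    exact ⟨C₂, h₁.tail h₂, hC₂⟩

variable [DecidableEq V]

theorem of_adj {u w : V} (h : G.Adj u w) (c : V → ℕ) :
    PebblingMove G (c + Pi.single u 2) (c + Pi.single w 1) := by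
  refine ⟨u, w, h, ?_, ?_, ?_, fun x hxu hxw => ?_⟩
  all_goals simp [h.ne, h.ne', *]

theorem reflTransGen_of_adj {u w : V} (h : G.Adj u w) (k : ℕ) (c : V → ℕ) :
    Relation.ReflTransGen (PebblingMove G) (c + Pi.single u (2 * k)) (c + Pi.single w k) := by
  induction k generalizing c with
  | zero => simpa using Relation.ReflTransGen.refl
  | succ k ih =>
    have hmove : Relation.ReflTransGen (PebblingMove G) (c + Pi.single u (2 * (k + 1)))
        (c + Pi.single w 1 + Pi.single u (2 * k)) := by
      rw [mul_add, mul_one, Pi.single_add, ← add_assoc, add_right_comm c (Pi.single w 1)]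
      exact .single (of_adj h _)
    simpa only [add_assoc, ← Pi.single_add, add_comm 1] using hmove.trans (ih _)

theorem reflTransGen_of_walk {u w : V} (p : G.Walk u w) (k : ℕ) (c : V → ℕ) :
    Relation.ReflTransGen (PebblingMove G) (c + Pi.single u (k * 2 ^ p.length))
      (c + Pi.single w k) := by
  induction p generalizing k with
  | nil => simpa using Relation.ReflTransGen.refl
  | cons h q ih =>
    rw [Walk.length_cons, pow_succ, ← mul_assoc, mul_comm _ 2]
    exact (reflTransGen_of_adj h _ c).trans (ih k)

end PebblingMove

namespace NSolvable

variable {V W : Type*} {G : SimpleGraph V}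

theorem add {a b : V → ℕ} {r : V} {t u : ℕ} (ha : NSolvable G a r t)
    (hb : NSolvable G b r u) : NSolvable G (a + b) r (t + u) := by
  obtain ⟨a', ha, hta⟩ := ha
  obtain ⟨b', hb, hub⟩ := hb
  exact ⟨a' + b', PebblingMove.reflTransGen_add ha hb, add_le_add hta hub⟩

theorem of_reflTransGen {c c' : V → ℕ} {r : V} {t : ℕ}
    (hcc' : Relation.ReflTransGen (PebblingMove G) c c') (h : NSolvable G c' r t) :
    NSolvable G c r t :=
  let ⟨c'', h', ht⟩ := h
  ⟨c'', hcc'.trans h', ht⟩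

theorem lift {G' : SimpleGraph W} (φ : G ↪g G') {C : W → ℕ} {r : V}
    {t : ℕ} (h : NSolvable G (C ∘ φ) r t) : NSolvable G' C (φ r) t := by
  obtain ⟨f', hf', ht⟩ := h
  obtain ⟨C', hC', rfl⟩ := PebblingMove.exists_reflTransGen_lift φ hf' rfl
  exact ⟨C', hC', ht⟩

theorem of_walk {u r : V} (p : G.Walk u r) {c : V → ℕ} {t : ℕ}
    (h : t * 2 ^ p.length ≤ c u) : NSolvable G c r t := by
  classical
  obtain ⟨e, rfl⟩ : ∃ e : V → ℕ, c = e + Pi.single u (t * 2 ^ p.length) := by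
    have hle : Pi.single u (t * 2 ^ p.length) ≤ c := fun x => by
      by_cases hx : x = u
      · subst hx; simpa using h
      · simp [hx]
    exact ⟨_, (tsub_add_cancel_of_le hle).symm⟩
  exact ⟨e + Pi.single r t, PebblingMove.reflTransGen_of_walk p t e, by simp⟩

theorem of_dist (hG : G.Connected) {u r : V} {c : V → ℕ} {t : ℕ}
    (h : t * 2 ^ G.dist u r ≤ c u) : NSolvable G c r t := by
  obtain ⟨p, hp⟩ := (hG u r).exists_walk_length_eq_dist
  exact of_walk p (hp ▸ h)

end NSolvable

section Fintype

variable {V : Type*} [Fintype V] {G : SimpleGraph V}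

theorem exists_le_sum_eq {k : ℕ} (f : V → ℕ) (hk : k ≤ ∑ v, f v) :
    ∃ g ≤ f, ∑ v, g v = k := by
  obtain ⟨g, hg, rfl⟩ := Finsupp.exists_le_degree_eq (Finsupp.equivFunOnFinite.symm f) k
    (by simpa [Finsupp.degree_eq_sum] using hk)
  exact ⟨g, fun v => by simpa using hg v, (Finsupp.degree_eq_sum g).symm⟩

theorem sum_tsub_one_add_card (f : V → ℕ) :
    ∑ v, (f v - 1) + #{v | 1 ≤ f v} = ∑ v, f v := by
  rw [card_filter, ← sum_add_distrib]
  exact sum_congr rfl fun v _ => by split_ifs <;> omega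

theorem exists_forall_nsolvable_of_le_sum (hG : G.Connected) (t : ℕ) :
    ∃ B, ∀ c : V → ℕ, B ≤ ∑ v, c v → ∀ r, NSolvable G c r t := by
  let K := ∑ u, ∑ r, 2 ^ G.dist u r
  refine ⟨Fintype.card V * (t * K) + 1, fun c hc r => ?_⟩
  obtain ⟨u, -, hu⟩ := exists_lt_of_sum_lt (s := univ) (f := fun _ => t * K) (g := c)
    (by simpa using hc)
  refine NSolvable.of_dist hG (le_trans ?_ hu.le)
  gcongr
  exact (single_le_sum (f := fun r => 2 ^ G.dist u r) (fun _ _ => Nat.zero_le _)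
    (mem_univ r)).trans
      (single_le_sum (f := fun u => ∑ r, 2 ^ G.dist u r) (fun _ _ => Nat.zero_le _) (mem_univ u))

theorem pebblingNumber_spec (hG : G.Connected) :
    ∀ c : V → ℕ, ∑ v, c v = pebblingNumber G → ∀ r, Solvable G c r := by
  obtain ⟨B, hB⟩ := exists_forall_nsolvable_of_le_sum hG 1
  exact Nat.sInf_mem (s := {k | ∀ c : V → ℕ, ∑ v, c v = k → ∀ r, Solvable G c r})
    ⟨B, fun c hc => hB c hc.ge⟩

theorem twoPebblingNumber_spec (hG : G.Connected) (s : ℕ) :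
    ∀ (r : V) (c : V → ℕ), twoPebblingNumber G s ≤ ∑ v, c v → #{v | 1 ≤ c v} = s →
      NSolvable G c r 2 := by
  obtain ⟨B, hB⟩ := exists_forall_nsolvable_of_le_sum hG 2
  exact Nat.sInf_mem (s := {m | ∀ (r : V) (c : V → ℕ), m ≤ ∑ v, c v →
    #{v | 1 ≤ c v} = s → NSolvable G c r 2}) ⟨B, fun r c hc _ => hB c hc r⟩

theorem nsolvable_of_mul_pebblingNumber_le (hG : G.Connected) (r : V) (k : ℕ) (f : V → ℕ)
    (h : k * pebblingNumber G ≤ ∑ v, f v) : NSolvable G f r k := by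
  induction k generalizing f with
  | zero => exact ⟨f, .refl, Nat.zero_le _⟩
  | succ k ih =>
    obtain ⟨g, hgf, hg⟩ := exists_le_sum_eq f ((Nat.le_mul_of_pos_left _ k.succ_pos).trans h)
    have hrest : k * pebblingNumber G ≤ ∑ v, (f - g) v := by
      rw [Pi.sub_def, sum_tsub_distrib _ fun v _ => hgf v, hg]
      rw [add_mul, one_mul] at h
      omega
    rw [← add_tsub_cancel_of_le hgf, add_comm k]
    exact (pebblingNumber_spec hG g hg r).add (ih _ hrest)

theorem le_twoPebblingNumber (hG : G.Connected) {s : ℕ} (hs : s ≤ Fintype.card V) :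
    s ≤ twoPebblingNumber G s := by
  classical
  by_contra! hlt
  obtain ⟨T, -, hT⟩ := exists_subset_card_eq (s := univ) hs
  obtain ⟨r, -⟩ : T.Nonempty := card_pos.1 (hT ▸ (Nat.zero_le _).trans_lt hlt)
  let c : V → ℕ := fun v => if v ∈ T then 1 else 0
  have hc : ∀ v, c v ≤ 1 := fun v => by unfold c; split_ifs <;> simp
  have hsupp : #{v | 1 ≤ c v} = s := by
    rw [← hT]; congr 1; ext v; by_cases hv : v ∈ T <;> simp [c, hv]
  have hsum : ∑ v, c v = s := by simp [c, hT]
  obtain ⟨c', hc', h2⟩ := twoPebblingNumber_spec hG s r c (hsum ▸ hlt.le) hsupp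
  rw [PebblingMove.eq_of_reflTransGen_of_le_one hc hc'] at h2
  exact absurd (h2.trans (hc r)) (by omega)

theorem nsolvable_add_two_of_twoPebblingNumber'_add_le (hG : G.Connected) (r : V)
    {f : V → ℕ} {m : ℕ}
    (h : twoPebblingNumber' G #{v | 1 ≤ f v} + m * pebblingNumber G ≤ ∑ v, f v) :
    NSolvable G f r (m + 2) := by
  unfold twoPebblingNumber' at h
  split_ifs at h with hs
  · exact nsolvable_of_mul_pebblingNumber_le hG r (m + 2) f (by rw [add_mul]; linarith)
  · have hcard := le_twoPebblingNumber hG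
      ((card_filter_le univ fun v => 1 ≤ f v).trans_eq card_univ)
    have hsplit := sum_tsub_one_add_card f
    obtain ⟨e, he, hes⟩ := exists_le_sum_eq (fun v => f v - 1) (k := m * pebblingNumber G)
      (by omega)
    have hef : e ≤ f := fun v => (he v).trans tsub_le_self
    have hsupp : #{v | 1 ≤ (f - e) v} = #{v | 1 ≤ f v} := by
      congr 1; ext v
      have : e v ≤ f v - 1 := he v
      simp only [mem_filter, mem_univ, true_and, Pi.sub_apply]
      omega
    have hsum : twoPebblingNumber G #{v | 1 ≤ f v} ≤ ∑ v, (f - e) v := by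
      rw [Pi.sub_def, sum_tsub_distrib _ fun v _ => hef v, hes]
      omega
    rw [← tsub_add_cancel_of_le hef, add_comm m]
    exact (twoPebblingNumber_spec hG _ r _ hsum hsupp).add
      (nsolvable_of_mul_pebblingNumber_le hG r m e hes.ge)

theorem twoPebblingNumber'_le_twoPebblingNumberMon {s s' : ℕ} (h : s ≤ s')
    (h' : s' ≤ Fintype.card V) : twoPebblingNumber' G s' ≤ twoPebblingNumberMon G s :=
  le_sup (mem_Icc.2 ⟨h, h'⟩)

end Fintype

theorem exists_reflTransGen_boxProd_slice {α β : Type*} [Fintype α] [Fintype β]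
    {G : SimpleGraph α} {H : SimpleGraph β} (hH : H.Connected) (c : α × β → ℕ) (v : β) :
    ∃ C, Relation.ReflTransGen (PebblingMove (G □ H)) c C ∧
      ∀ i, ∑ j, c (i, j) / 2 ^ H.dist v j ≤ C (i, v) := by
  classical
  have hmove : ∀ i j, Relation.ReflTransGen (PebblingMove (G □ H)) (Pi.single (i, j) (c (i, j)))
      (Pi.single (i, j) (c (i, j) % 2 ^ H.dist v j) +
        Pi.single (i, v) (c (i, j) / 2 ^ H.dist v j)) := by
    intro i j
    obtain ⟨w, hw⟩ := (hH j v).exists_walk_length_eq_dist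
    have hlen : (w.boxProdRight G i).length = H.dist v j :=
      (Walk.length_map _ w).trans (hw.trans dist_comm)
    have := PebblingMove.reflTransGen_of_walk (w.boxProdRight G i) (c (i, j) / 2 ^ H.dist v j)
      (Pi.single (i, j) (c (i, j) % 2 ^ H.dist v j))
    rwa [hlen, ← Pi.single_add, Nat.mod_add_div'] at this
  refine ⟨_, by simpa only [univ_sum_single] using
    PebblingMove.reflTransGen_sum univ fun (p : α × β) _ => hmove p.1 p.2, fun i => ?_⟩
  calc ∑ j, c (i, j) / 2 ^ H.dist v j
      = ∑ p : α × β,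
          (Pi.single (p.1, v) (c p / 2 ^ H.dist v p.2) : α × β → ℕ) (i, v) := by
        simp [Fintype.sum_prod_type, Pi.single_apply]
    _ ≤ ∑ p : α × β, (Pi.single p (c p % 2 ^ H.dist v p.2) +
          Pi.single (p.1, v) (c p / 2 ^ H.dist v p.2) : α × β → ℕ) (i, v) :=
        sum_le_sum fun p _ => le_add_self
    _ = _ := (Finset.sum_apply _ _ _).symm

/-- constraint A.6(K, v) is valid: with `d = dist_H(v, r_H)` and `v ≠ r_H`,
if the stacks in the other slices (counted toward `v`) together with the pebbles on `G_v`
number at least `π₂^{mon}(G, s_v) + (2^d - 2)·π(G)`, then the configuration is solvable. -/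
theorem stmt8 {α β : Type*} [Fintype α] [Fintype β] [DecidableEq β]
    (G : SimpleGraph α) (H : SimpleGraph β) (hG : G.Connected) (hH : H.Connected)
    (c : α × β → ℕ) (rG : α) (rH : β)
    (v : β) (hv : v ≠ rH) (d : ℕ) (hd : d = H.dist v rH)
    (h : (∑ j ∈ (Finset.univ \ {rH, v} : Finset β),
          ∑ i : α, c (i, j) / 2 ^ (H.dist v j))
        + (∑ i : α, c (i, v))
        ≥ twoPebblingNumberMon G ((Finset.univ.filter fun i : α => 1 ≤ c (i, v)).card)
          + (2 ^ d - 2) * pebblingNumber G) :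
    Solvable (G.boxProd H) c (rG, rH) := by
  obtain ⟨C, hcC, hC⟩ := exists_reflTransGen_boxProd_slice (G := G) hH c v
  have hslice : ∀ i, c (i, v) ≤ C (i, v) := fun i => by
    simpa using (single_le_sum (f := fun j => c (i, j) / 2 ^ H.dist v j)
      (fun _ _ => Nat.zero_le _) (mem_univ v)).trans (hC i)
  have hsum : (∑ j ∈ (univ \ {rH, v} : Finset β), ∑ i, c (i, j) / 2 ^ H.dist v j)
      + ∑ i, c (i, v) ≤ ∑ i, C (i, v) :=
    calc _ = ∑ j ∈ insert v (univ \ {rH, v}), ∑ i, c (i, j) / 2 ^ H.dist v j := by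
          simp [sum_insert (show v ∉ (univ \ {rH, v} : Finset β) by simp), add_comm]
      _ ≤ ∑ j, ∑ i, c (i, j) / 2 ^ H.dist v j := sum_le_sum_of_subset (subset_univ _)
      _ = ∑ i, ∑ j, c (i, j) / 2 ^ H.dist v j := sum_comm
      _ ≤ ∑ i, C (i, v) := sum_le_sum fun i _ => hC i
  have hsupp : #{i | 1 ≤ c (i, v)} ≤ #{i | 1 ≤ C (i, v)} :=
    card_le_card (monotone_filter_right univ fun i _ h => h.trans (hslice i))
  have hmon := twoPebblingNumber'_le_twoPebblingNumberMon (G := G) hsupp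
    ((card_filter_le univ fun i => 1 ≤ C (i, v)).trans_eq card_univ)
  have hd2 : 2 ≤ 2 ^ d := hd ▸ Nat.le_self_pow (hH.pos_dist_of_ne hv).ne' 2
  have hstack : NSolvable G (fun i => C (i, v)) rG (2 ^ d - 2 + 2) :=
    nsolvable_add_two_of_twoPebblingNumber'_add_le hG rG (by omega)
  rw [Nat.sub_add_cancel hd2] at hstack
  obtain ⟨C', hCC', hC'⟩ := NSolvable.lift (C := C) (G.boxProdLeft H v) hstack
  obtain ⟨w, hw⟩ := (hH v rH).exists_walk_length_eq_dist
  have hlen : (w.boxProdRight G rG).length = d := (Walk.length_map _ w).trans (hw.trans hd.symm)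
  exact NSolvable.of_reflTransGen (hcC.trans hCC')
    (NSolvable.of_walk (w.boxProdRight G rG) (by rw [hlen, one_mul]; exact hC'))
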